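/- (Parabolic point-selection lemma.) Let R > 0, N > 0 and (x₀, t₀) ∈ ℝ³ × ℝ. Let S be a subset of the open parabolic cylinder C_{2R}(x₀, t₀) containing (x₀, t₀) whose intersection with the closed parabolic cylinder B̄_R(x₀) × [t₀ − R², t₀ + R²] is compact, and let A : S → [0, ∞) be a continuous function with A(x₀, t₀) ≥ 4N R^{-1}. Then there exist (q, s) ∈ S and γ > 0 with γ = A(q, s)^{-1}, such that C_{Nγ}(q, s) ⊆ C_{2R}(x₀, t₀) and sup { A(y, τ) : (y, τ) ∈ S ∩ C_{Nγ}(q, s) } ≤ 2γ^{-1} = 2 A(q, s). -/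

import Mathlib

open Metric Set

/-- The open parabolic cylinder `C_r(x,t) = B_r(x) × (t - r², t + r²)` in space-time
`ℝ³ × ℝ`. -/
def parabolicCyl (c : EuclideanSpace ℝ (Fin 3) × ℝ) (r : ℝ) :
    Set (EuclideanSpace ℝ (Fin 3) × ℝ) :=
  Metric.ball c.1 r ×ˢ Set.Ioo (c.2 - r ^ 2) (c.2 + r ^ 2)

/-- The closed parabolic cylinder `B̄_r(x) × [t - r², t + r²]` in space-time `ℝ³ × ℝ`. -/
def closedParabolicCyl (c : EuclideanSpace ℝ (Fin 3) × ℝ) (r : ℝ) :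
    Set (EuclideanSpace ℝ (Fin 3) × ℝ) :=
  Metric.closedBall c.1 r ×ˢ Set.Icc (c.2 - r ^ 2) (c.2 + r ^ 2)

/-!
Call `p ∈ S` admissible if `A p > 0` and the cylinder of radius `r = N / A p` about `p` lies
in `C_R(x₀,t₀)` with a margin of `r` in space and `r²` in time. The centre `(x₀,t₀)` is
admissible, and admissible points lie in the compact set `S ∩ C̄_R(x₀,t₀)`, so `A` is bounded on
them and some admissible `q` has `2 A q` bounding all their values. If a point `p` of
`S ∩ C_{N/A q}(q)` had `A p > 2 A q`, its radius `N / A p < r/2` would fit into the margin left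
around `q`, making `p` admissible, which is impossible.
-/

theorem exists_forall_le_mul_of_bddAbove {α : Type*} {s : Set α} {f : α → ℝ} {c : ℝ}
    (hc : 1 < c) (hne : s.Nonempty) (hbdd : BddAbove (f '' s)) (hpos : ∀ p ∈ s, 0 < f p) :
    ∃ p ∈ s, ∀ q ∈ s, f q ≤ c * f p := by
  obtain ⟨p₀, hp₀⟩ := hne
  set M := sSup (f '' s)
  have hM : 0 < M := (hpos p₀ hp₀).trans_le (le_csSup hbdd (mem_image_of_mem f hp₀))
  have hMc : M / c < M := div_lt_self hM hc
  obtain ⟨_, ⟨p, hp, rfl⟩, hlt⟩ := exists_lt_of_lt_csSup ⟨f p₀, mem_image_of_mem f hp₀⟩ hMc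
  refine ⟨p, hp, fun q hq => ?_⟩
  calc f q ≤ M := le_csSup hbdd (mem_image_of_mem f hq)
    _ ≤ c * f p := ((div_lt_iff₀' (zero_lt_one.trans hc)).1 hlt).le

def WellInside (c : EuclideanSpace ℝ (Fin 3) × ℝ) (R : ℝ) (p : EuclideanSpace ℝ (Fin 3) × ℝ)
    (r : ℝ) : Prop :=
  dist p.1 c.1 + 2 * r ≤ R ∧ |p.2 - c.2| + 2 * r ^ 2 ≤ R ^ 2

namespace WellInside

variable {c p q : EuclideanSpace ℝ (Fin 3) × ℝ} {R r r' : ℝ}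

theorem self (hr : 0 ≤ r) (hrR : r ≤ R / 2) : WellInside c R c r := by
  simp only [WellInside, dist_self, sub_self, abs_zero, zero_add]
  constructor <;> nlinarith

theorem mem_closedParabolicCyl (h : WellInside c R p r) (hr : 0 ≤ r) :
    p ∈ closedParabolicCyl c R := by
  obtain ⟨hx, ht⟩ := h
  refine ⟨mem_closedBall.2 (by linarith), ?_⟩
  have := abs_le.1 (show |p.2 - c.2| ≤ R ^ 2 by nlinarith)
  constructor <;> linarith

theorem parabolicCyl_subset (h : WellInside c R p r) (hr : 0 ≤ r) :
    parabolicCyl p r ⊆ parabolicCyl c (2 * R) := by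
  obtain ⟨hx, ht⟩ := h
  rintro y ⟨hy, hyt⟩
  have hR : 0 ≤ R := by linarith [dist_nonneg (x := p.1) (y := c.1)]
  refine ⟨mem_ball.2 ?_, ?_⟩
  · calc dist y.1 c.1 ≤ dist y.1 p.1 + dist p.1 c.1 := dist_triangle _ _ _
      _ < 2 * R := by linarith [mem_ball.1 hy]
  · have hpt := abs_le.1 (show |p.2 - c.2| ≤ R ^ 2 - r ^ 2 by nlinarith)
    have hyt := mem_Ioo.1 hyt
    constructor <;> nlinarith

theorem of_mem_parabolicCyl (h : WellInside c R p r) (hq : q ∈ parabolicCyl p r)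
    (hr' : 0 ≤ r') (hrr' : 2 * r' ≤ r) : WellInside c R q r' := by
  obtain ⟨hx, ht⟩ := h
  obtain ⟨hqx, hqt⟩ := hq
  constructor
  · calc dist q.1 c.1 + 2 * r' ≤ dist q.1 p.1 + dist p.1 c.1 + r := by
          linarith [dist_triangle q.1 p.1 c.1]
      _ ≤ R := by linarith [mem_ball.1 hqx]
  · have hqt' : |q.2 - p.2| ≤ r ^ 2 := abs_le.2 (by constructor <;> linarith [mem_Ioo.1 hqt])
    calc |q.2 - c.2| + 2 * r' ^ 2 ≤ |q.2 - p.2| + |p.2 - c.2| + r ^ 2 := by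
          nlinarith [abs_sub_le q.2 p.2 c.2]
      _ ≤ R ^ 2 := by linarith

end WellInside

theorem parabolic_point_selection_general (R N : ℝ) (hR : 0 < R) (hN : 0 < N)
    (x₀ : EuclideanSpace ℝ (Fin 3)) (t₀ : ℝ)
    (S : Set (EuclideanSpace ℝ (Fin 3) × ℝ))
    (hmem : (x₀, t₀) ∈ S)
    (hcpt : IsCompact (S ∩ closedParabolicCyl (x₀, t₀) R))
    (A : EuclideanSpace ℝ (Fin 3) × ℝ → ℝ)
    (hAcont : ContinuousOn A S)
    (hA : 4 * N * R⁻¹ ≤ A (x₀, t₀)) :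
    ∃ q ∈ S, ∃ γ : ℝ, 0 < γ ∧ γ = (A q)⁻¹ ∧
      parabolicCyl q (N * γ) ⊆ parabolicCyl (x₀, t₀) (2 * R) ∧
      ∀ p ∈ S ∩ parabolicCyl q (N * γ), A p ≤ 2 * γ⁻¹ := by
  set adm := {p ∈ S | 0 < A p ∧ WellInside (x₀, t₀) R p (N * (A p)⁻¹)}
  have hA₀ : 0 < A (x₀, t₀) := lt_of_lt_of_le (by positivity) hA
  have hcentre : (x₀, t₀) ∈ adm := by
    refine ⟨hmem, hA₀, WellInside.self (by positivity) ?_⟩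
    rw [← div_eq_mul_inv, div_le_iff₀ hA₀]
    rw [← div_eq_mul_inv, div_le_iff₀ hR] at hA
    nlinarith
  have hadm : adm ⊆ S ∩ closedParabolicCyl (x₀, t₀) R := fun p ⟨hpS, hAp, hp⟩ =>
    ⟨hpS, hp.mem_closedParabolicCyl (by positivity)⟩
  have hbdd : BddAbove (A '' adm) :=
    (hcpt.bddAbove_image (hAcont.mono inter_subset_left)).mono (image_mono hadm)
  obtain ⟨q, ⟨hqS, hqA, hq⟩, hmax⟩ :=
    exists_forall_le_mul_of_bddAbove one_lt_two ⟨_, hcentre⟩ hbdd fun p hp => hp.2.1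
  refine ⟨q, hqS, (A q)⁻¹, inv_pos.2 hqA, rfl, hq.parabolicCyl_subset (by positivity), ?_⟩
  rintro p ⟨hpS, hp⟩
  rw [inv_inv]
  refine (le_total (A p) (2 * A q)).elim id fun hpq => hmax p ⟨hpS, by linarith, ?_⟩
  have hAp : 0 < A p := by linarith
  refine hq.of_mem_parabolicCyl hp (by positivity) ?_
  have hinv : (A p)⁻¹ ≤ 2⁻¹ * (A q)⁻¹ := mul_inv (2 : ℝ) (A q) ▸ inv_anti₀ (by positivity) hpq
  nlinarith

/-- **Lemma 3.4 (parabolic point selection).** If `S ⊆ C_{2R}(x₀,t₀)` contains `(x₀,t₀)`,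
meets the closed parabolic cylinder of radius `R` in a compact set, and `A : S → [0,∞)` is
continuous with `A(x₀,t₀) ≥ 4N/R`, then there are `(q,s) ∈ S` and `γ = A(q,s)⁻¹ > 0` with
`C_{Nγ}(q,s) ⊆ C_{2R}(x₀,t₀)` and `sup_{S ∩ C_{Nγ}(q,s)} A ≤ 2γ⁻¹ = 2A(q,s)`. -/
theorem parabolic_point_selection (R N : ℝ) (hR : 0 < R) (hN : 0 < N)
    (x₀ : EuclideanSpace ℝ (Fin 3)) (t₀ : ℝ)
    (S : Set (EuclideanSpace ℝ (Fin 3) × ℝ))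
    (hS : S ⊆ parabolicCyl (x₀, t₀) (2 * R))
    (hmem : (x₀, t₀) ∈ S)
    (hcpt : IsCompact (S ∩ closedParabolicCyl (x₀, t₀) R))
    (A : EuclideanSpace ℝ (Fin 3) × ℝ → ℝ)
    (hAcont : ContinuousOn A S)
    (hAnonneg : ∀ p ∈ S, 0 ≤ A p)
    (hA : 4 * N * R⁻¹ ≤ A (x₀, t₀)) :
    ∃ q ∈ S, ∃ γ : ℝ, 0 < γ ∧ γ = (A q)⁻¹ ∧
      parabolicCyl q (N * γ) ⊆ parabolicCyl (x₀, t₀) (2 * R) ∧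
      ∀ p ∈ S ∩ parabolicCyl q (N * γ), A p ≤ 2 * γ⁻¹ :=
  parabolic_point_selection_general R N hR hN x₀ t₀ S hmem hcpt A hAcont hA
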